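/- Let n ≥ 2 and p > 0, and let μ be the generalized Minkowski functional of 𝔼_{p,n}, i.e. μ(z) := inf{λ > 0 : (λ^{-1}z₁, λ^{-2}z₂, …, λ^{-n}z_n) ∈ 𝔼_{p,n}} for z ∈ ℂⁿ. Then for every z ∈ ℂⁿ, μ(z) = max{(∑_{j=1}ⁿ |w_j|^{2p})^{1/(2p)} : w ∈ ℂⁿ, π_n(w) = z}, and μ is continuous on ℂⁿ. -/

import Mathlib

/-!
A fibre of `π_n` is the set of orderings of the roots of one monic polynomial (Vieta), so every
symmetric function of `w` is constant on it, and `π_n` is onto because `ℂ` is algebraically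
closed. As `π_n(t w)_k = t^k π_n(w)_k`, the point `(t⁻¹ z₁, …, t⁻ⁿ zₙ)` lies in `𝔼_{p,n}` iff
`t⁻¹ w ∈ 𝔹_{p,n}` for some (equivalently every) `w` in the fibre over `z`, i.e. iff
`(∑ |w_j|^(2p))^(1/(2p)) < t`; hence `μ ∘ π_n` is this gauge. Cauchy's bound on the roots makes
`π_n` proper, hence a quotient map, so `μ` is continuous because `μ ∘ π_n` is.
-/

open Finset

/-- The symmetrization map `π_n : ℂⁿ → ℂⁿ`, whose `k`-th component is the
`(k+1)`-st elementary symmetric polynomial of the coordinates. -/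
noncomputable def piMap (n : ℕ) (z : Fin n → ℂ) : Fin n → ℂ :=
  fun k => ∑ s ∈ Finset.powersetCard (k.1 + 1) Finset.univ, ∏ j ∈ s, z j

/-- The generalized complex ellipsoid `𝔹_{p,n} = {z : ∑ |z_j|^(2p) < 1}`. -/
noncomputable def ellipsoid (p : ℝ) (n : ℕ) : Set (Fin n → ℂ) :=
  {z | ∑ j, ‖z j‖ ^ (2 * p) < 1}

/-- The symmetrized `(p,n)`-ellipsoid `𝔼_{p,n} = π_n(𝔹_{p,n})`. -/
noncomputable def symEllipsoid (p : ℝ) (n : ℕ) : Set (Fin n → ℂ) :=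
  piMap n '' ellipsoid p n

/-- The Euclidean unit ball in `ℂⁿ`. -/
def unitBall (n : ℕ) : Set (Fin n → ℂ) :=
  {z | ∑ j, ‖z j‖ ^ 2 < 1}

/-- `f` is a proper holomorphic map from the domain `D` onto (into) the domain `G`:
it is holomorphic on `D`, maps `D` into `G`, and preimages of compact subsets of `G`
are compact. -/
def IsProperHolomorphic {n : ℕ} (f : (Fin n → ℂ) → (Fin n → ℂ))
    (D G : Set (Fin n → ℂ)) : Prop :=
  DifferentiableOn ℂ f D ∧ Set.MapsTo f D G ∧
    ∀ K : Set (Fin n → ℂ), K ⊆ G → IsCompact K → IsCompact (D ∩ f ⁻¹' K)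

/-- `φ` is an automorphism of the domain `D`: a holomorphic bijection of `D` onto
itself with holomorphic inverse. -/
def IsAutomorphismOf {n : ℕ} (φ : (Fin n → ℂ) → (Fin n → ℂ))
    (D : Set (Fin n → ℂ)) : Prop :=
  DifferentiableOn ℂ φ D ∧ Set.BijOn φ D D ∧
    ∃ ψ : (Fin n → ℂ) → (Fin n → ℂ), DifferentiableOn ℂ ψ D ∧ Set.InvOn ψ φ D D

/-- `f : ℂⁿ → ℂⁿ` is a polynomial mapping. -/
def IsPolynomialMap {n : ℕ} (f : (Fin n → ℂ) → (Fin n → ℂ)) : Prop :=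
  ∃ P : Fin n → MvPolynomial (Fin n) ℂ, ∀ z k, f z k = MvPolynomial.eval z (P k)

open Polynomial

namespace Multiset

theorem eq_of_card_eq_of_esymm_eq {R : Type*} [CommRing R] [IsDomain R] {s t : Multiset R}
    (hcard : card s = card t) (h : ∀ k ≤ card s, s.esymm k = t.esymm k) : s = t := by
  rw [← roots_multiset_prod_X_sub_C s, ← roots_multiset_prod_X_sub_C t,
    prod_X_sub_X_eq_sum_esymm, prod_X_sub_X_eq_sum_esymm, ← hcard]
  congr 1
  refine Finset.sum_congr rfl fun k hk => ?_
  rw [h k (Nat.lt_succ_iff.mp (Finset.mem_range.mp hk))]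

theorem exists_card_eq_esymm_succ_eq {K : Type*} [Field K] [IsAlgClosed K] (n : ℕ)
    (e : Fin n → K) : ∃ s : Multiset K, card s = n ∧ ∀ k : Fin n, s.esymm (k + 1) = e k := by
  set Q : K[X] := ∑ k : Fin n, C ((-1) ^ (k.1 + 1) * e k) * X ^ (n - 1 - k.1)
  have hQ : Q.degree < n := by
    refine (degree_sum_le _ _).trans_lt ((Finset.sup_lt_iff (WithBot.bot_lt_coe n)).2 ?_)
    exact fun k _ => (degree_C_mul_X_pow_le _ _).trans_lt (Nat.cast_lt.2 (by omega))
  have hmonic : (X ^ n + Q).Monic := monic_X_pow_add hQ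
  have hdeg : (X ^ n + Q).natDegree = n := by
    rw [natDegree_add_eq_left_of_degree_lt (by rwa [degree_X_pow]), natDegree_X_pow]
  have hsplit : (X ^ n + Q).Splits := IsAlgClosed.splits _
  refine ⟨(X ^ n + Q).roots, (splits_iff_card_roots.1 hsplit).trans hdeg, fun k => ?_⟩
  have hcoeff : (X ^ n + Q).coeff (n - 1 - k) = (-1) ^ (k.1 + 1) * e k := by
    rw [coeff_add, coeff_X_pow, if_neg (by omega), zero_add, finsetSum_coeff,
      Fintype.sum_eq_single k fun j hj => by rw [coeff_C_mul_X_pow, if_neg (by omega)]]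
    rw [coeff_C_mul_X_pow, if_pos rfl]
  have vieta := coeff_eq_esymm_roots_of_splits hsplit (k := n - 1 - k) (by omega)
  rw [hcoeff, hmonic.leadingCoeff, hdeg, show n - (n - 1 - k) = k + 1 by omega, one_mul] at vieta
  exact (mul_left_cancel₀ (pow_ne_zero _ (neg_ne_zero.2 one_ne_zero)) vieta).symm

theorem nnnorm_lt_of_mem_of_nnnorm_esymm_le {K : Type*} [NormedField K] {s : Multiset K}
    {B : NNReal} (hB : ∀ k, 0 < k → k ≤ card s → ‖s.esymm k‖₊ ≤ B) {a : K} (ha : a ∈ s) :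
    ‖a‖₊ < B + 1 := by
  set P := (s.map fun a => X - C a).prod
  have hmonic : P.Monic := monic_multiset_prod_of_monic _ _ fun a _ => monic_X_sub_C a
  have hroot : P.IsRoot a :=
    (mem_roots hmonic.ne_zero).1 (by rwa [roots_multiset_prod_X_sub_C])
  refine (hroot.norm_lt_cauchyBound hmonic.ne_zero).trans_le ?_
  rw [cauchyBound, hmonic.leadingCoeff, nnnorm_one, div_one,
    natDegree_multiset_prod_X_sub_C_eq_card]
  gcongr
  refine Finset.sup_le fun m hm => ?_
  rw [prod_X_sub_C_coeff s (Finset.mem_range.1 hm).le, nnnorm_mul, nnnorm_pow, nnnorm_neg,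
    nnnorm_one, one_pow, one_mul]
  exact hB _ (Nat.sub_pos_of_lt (Finset.mem_range.1 hm)) (Nat.sub_le _ _)

theorem exists_univ_map_eq {α : Type*} (s : Multiset α) :
    ∃ w : Fin (card s) → α, Finset.univ.val.map w = s := by
  refine ⟨fun i => s.toList.get (i.cast s.length_toList.symm), ?_⟩
  rw [Fin.univ_val_map, ← List.ofFn_congr s.length_toList, List.ofFn_get, coe_toList]

end Multiset

section piMap

variable {n : ℕ}

theorem piMap_eq_esymm (w : Fin n → ℂ) (k : Fin n) :
    piMap n w k = (univ.val.map w).esymm (k + 1) := by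
  rw [Finset.esymm_map_val]
  rfl

theorem piMap_smul (c : ℂ) (w : Fin n → ℂ) (k : Fin n) :
    piMap n (c • w) k = c ^ (k.1 + 1) * piMap n w k := by
  simp only [piMap, Pi.smul_apply, smul_eq_mul, Finset.mul_sum]
  refine Finset.sum_congr rfl fun s hs => ?_
  rw [Finset.prod_mul_distrib, Finset.prod_const, (Finset.mem_powersetCard.mp hs).2]

theorem univ_map_eq_of_piMap_eq {w w' : Fin n → ℂ} (h : piMap n w = piMap n w') :
    univ.val.map w = univ.val.map w' := by
  refine Multiset.eq_of_card_eq_of_esymm_eq (by simp) fun k hk => ?_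
  rcases k with _ | k
  · simp [Multiset.esymm]
  · have hk : k < n := by simpa using hk
    simpa [piMap_eq_esymm] using congrFun h ⟨k, hk⟩

theorem piMap_surjective (n : ℕ) : Function.Surjective (piMap n) := by
  intro z
  obtain ⟨s, rfl, hs⟩ := Multiset.exists_card_eq_esymm_succ_eq n z
  obtain ⟨w, hw⟩ := s.exists_univ_map_eq
  exact ⟨w, funext fun k => by rw [piMap_eq_esymm, hw, hs]⟩

theorem norm_le_norm_piMap_add_one (w : Fin n → ℂ) : ‖w‖ ≤ ‖piMap n w‖ + 1 := by
  refine (pi_norm_le_iff_of_nonneg (by positivity)).2 fun j => ?_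
  have hB : ∀ k, 0 < k → k ≤ Multiset.card (univ.val.map w) →
      ‖(univ.val.map w).esymm k‖₊ ≤ ‖piMap n w‖₊ := by
    intro k hk0 hkn
    obtain ⟨k, rfl⟩ := Nat.exists_eq_add_of_lt hk0
    have hk : k < n := by simpa using hkn
    simpa [piMap_eq_esymm] using nnnorm_le_pi_nnnorm (piMap n w) ⟨k, hk⟩
  exact (Multiset.nnnorm_lt_of_mem_of_nnnorm_esymm_le hB (Multiset.mem_map_of_mem w
    (Finset.mem_univ_val j))).le

theorem continuous_piMap (n : ℕ) : Continuous (piMap n) :=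
  continuous_pi fun _ => continuous_finsetSum _ fun _ _ =>
    continuous_finsetProd _ fun j _ => continuous_apply j

theorem isProperMap_piMap (n : ℕ) : IsProperMap (piMap n) := by
  refine isProperMap_iff_isCompact_preimage.2 ⟨continuous_piMap n, fun K hK => ?_⟩
  obtain ⟨R, hR⟩ := hK.isBounded.subset_closedBall 0
  refine Metric.isCompact_of_isClosed_isBounded (hK.isClosed.preimage (continuous_piMap n))
    ((Metric.isBounded_closedBall (x := 0) (r := R + 1)).subset fun w hw => ?_)
  have := hR hw
  simp only [Metric.mem_closedBall, dist_zero_right] at this ⊢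
  linarith [norm_le_norm_piMap_add_one w]

theorem isQuotientMap_piMap (n : ℕ) : Topology.IsQuotientMap (piMap n) :=
  (isProperMap_piMap n).isClosedMap.isQuotientMap (continuous_piMap n) (piMap_surjective n)

end piMap

noncomputable def ellipsoidGauge (p : ℝ) {n : ℕ} (w : Fin n → ℂ) : ℝ :=
  (∑ j, ‖w j‖ ^ (2 * p)) ^ (1 / (2 * p))

section ellipsoidGauge

variable {n : ℕ} {p : ℝ}

theorem ellipsoidGauge_nonneg (p : ℝ) (w : Fin n → ℂ) : 0 ≤ ellipsoidGauge p w := by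
  unfold ellipsoidGauge
  positivity

theorem ellipsoidGauge_eq_of_piMap_eq (p : ℝ) {w w' : Fin n → ℂ}
    (h : piMap n w = piMap n w') : ellipsoidGauge p w = ellipsoidGauge p w' := by
  have hsum : ∀ v : Fin n → ℂ, ∑ j, ‖v j‖ ^ (2 * p) =
      ((univ.val.map v).map fun a => ‖a‖ ^ (2 * p)).sum := fun v => by
    rw [Multiset.map_map, Finset.sum_map_val]
    rfl
  rw [ellipsoidGauge, ellipsoidGauge, hsum, hsum, univ_map_eq_of_piMap_eq h]

theorem ellipsoidGauge_smul (hp : p ≠ 0) (c : ℂ) (w : Fin n → ℂ) :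
    ellipsoidGauge p (c • w) = ‖c‖ * ellipsoidGauge p w := by
  simp only [ellipsoidGauge, Pi.smul_apply, smul_eq_mul, norm_mul,
    Real.mul_rpow (norm_nonneg _) (norm_nonneg _), ← Finset.mul_sum]
  rw [Real.mul_rpow (by positivity) (by positivity), ← Real.rpow_mul (norm_nonneg _),
    mul_one_div_cancel (mul_ne_zero two_ne_zero hp), Real.rpow_one]

theorem mem_ellipsoid_iff_ellipsoidGauge_lt_one (hp : 0 < p) (w : Fin n → ℂ) :
    w ∈ ellipsoid p n ↔ ellipsoidGauge p w < 1 :=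
  (Real.rpow_lt_one_iff' (by positivity) (by positivity)).symm

theorem continuous_ellipsoidGauge (hp : 0 < p) : Continuous (ellipsoidGauge p (n := n)) :=
  (continuous_finsetSum _ fun j _ => (continuous_apply j).norm.rpow_const
    fun _ => Or.inr (by positivity)).rpow_const fun _ => Or.inr (by positivity)

end ellipsoidGauge

theorem scaled_piMap_mem_symEllipsoid_iff {n : ℕ} {p : ℝ} (hp : 0 < p) (w : Fin n → ℂ) {t : ℝ}
    (ht : 0 < t) : (fun k : Fin n => piMap n w k / (t : ℂ) ^ (k.1 + 1)) ∈ symEllipsoid p n ↔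
      ellipsoidGauge p w < t := by
  have htC : (t : ℂ) ≠ 0 := Complex.ofReal_ne_zero.2 ht.ne'
  have hscale : ∀ u : Fin n → ℂ, piMap n u = (fun k : Fin n => piMap n w k / (t : ℂ) ^ (k.1 + 1))
      ↔ piMap n ((t : ℂ) • u) = piMap n w := fun u => by
    simp only [funext_iff, piMap_smul, eq_div_iff (pow_ne_zero _ htC), mul_comm]
  constructor
  · rintro ⟨u, hu, hpiu⟩
    rw [← ellipsoidGauge_eq_of_piMap_eq p ((hscale u).1 hpiu), ellipsoidGauge_smul hp.ne',
      Complex.norm_of_nonneg ht.le]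
    exact mul_lt_of_lt_one_right ht ((mem_ellipsoid_iff_ellipsoidGauge_lt_one hp u).1 hu)
  · intro hw
    refine ⟨(t : ℂ)⁻¹ • w, ?_, (hscale _).2 (by rw [smul_inv_smul₀ htC])⟩
    rw [mem_ellipsoid_iff_ellipsoidGauge_lt_one hp, ellipsoidGauge_smul hp.ne', norm_inv,
      Complex.norm_of_nonneg ht.le, inv_mul_lt_iff₀ ht, mul_one]
    exact hw

theorem sInf_scaled_piMap_mem_symEllipsoid {n : ℕ} {p : ℝ} (hp : 0 < p) (w : Fin n → ℂ) :
    sInf {t : ℝ | 0 < t ∧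
      (fun k : Fin n => piMap n w k / (t : ℂ) ^ (k.1 + 1)) ∈ symEllipsoid p n} =
      ellipsoidGauge p w := by
  have hset : {t : ℝ | 0 < t ∧
      (fun k : Fin n => piMap n w k / (t : ℂ) ^ (k.1 + 1)) ∈ symEllipsoid p n} =
      Set.Ioi (ellipsoidGauge p w) := by
    ext t
    refine ⟨fun ⟨ht, hmem⟩ => (scaled_piMap_mem_symEllipsoid_iff hp w ht).1 hmem, fun ht => ?_⟩
    have ht0 : 0 < t := (ellipsoidGauge_nonneg p w).trans_lt ht
    exact ⟨ht0, (scaled_piMap_mem_symEllipsoid_iff hp w ht0).2 ht⟩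
  rw [hset, csInf_Ioi]

theorem minkowski_functional_symEllipsoid_general (n : ℕ) (p : ℝ)
    (hp : 0 < p) (μ : (Fin n → ℂ) → ℝ)
    (hμ : ∀ z : Fin n → ℂ, μ z = sInf {t : ℝ | 0 < t ∧
      (fun k : Fin n => z k / (t : ℂ) ^ (k.1 + 1)) ∈ symEllipsoid p n}) :
    (∀ z : Fin n → ℂ,
      (∃ w : Fin n → ℂ, piMap n w = z ∧
        μ z = (∑ j, ‖w j‖ ^ (2 * p)) ^ (1 / (2 * p))) ∧
      (∀ w : Fin n → ℂ, piMap n w = z →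
        (∑ j, ‖w j‖ ^ (2 * p)) ^ (1 / (2 * p)) ≤ μ z)) ∧
    Continuous μ := by
  have hμπ : ∀ w, μ (piMap n w) = ellipsoidGauge p w := fun w =>
    (hμ _).trans (sInf_scaled_piMap_mem_symEllipsoid hp w)
  refine ⟨fun z => ?_, ?_⟩
  · obtain ⟨w, rfl⟩ := piMap_surjective n z
    exact ⟨⟨w, rfl, hμπ w⟩, fun w' hw' => by rw [← hw', hμπ w']; rfl⟩
  · rw [(isQuotientMap_piMap n).continuous_iff, Function.comp_def]
    simpa only [hμπ] using continuous_ellipsoidGauge hp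

/-- The generalized Minkowski functional `μ` of the `(1,2,…,n)`-balanced domain
`𝔼_{p,n}` satisfies `μ(z) = max{(∑ |w_j|^(2p))^(1/(2p)) : π_n(w) = z}` (the
maximum is attained), and `μ` is continuous. -/
theorem minkowski_functional_symEllipsoid (n : ℕ) (hn : 2 ≤ n) (p : ℝ)
    (hp : 0 < p) (μ : (Fin n → ℂ) → ℝ)
    (hμ : ∀ z : Fin n → ℂ, μ z = sInf {t : ℝ | 0 < t ∧
      (fun k : Fin n => z k / (t : ℂ) ^ (k.1 + 1)) ∈ symEllipsoid p n}) :
    (∀ z : Fin n → ℂ,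
      (∃ w : Fin n → ℂ, piMap n w = z ∧
        μ z = (∑ j, ‖w j‖ ^ (2 * p)) ^ (1 / (2 * p))) ∧
      (∀ w : Fin n → ℂ, piMap n w = z →
        (∑ j, ‖w j‖ ^ (2 * p)) ^ (1 / (2 * p)) ≤ μ z)) ∧
    Continuous μ :=
  minkowski_functional_symEllipsoid_general n p hp μ hμ
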